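/- Let L > 0 and let γ : ℝ → ℝ³ be a smooth L-periodic curve with ‖γ(s)‖ = 1 and ‖γ'(s)‖ = 1 for all s. Define η(s) := γ(s) × γ'(s) and k_g(s) := ⟨γ''(s), η(s)⟩, assume k_g > 0, and assume there exists A with 0 < A < 2π and ∫₀ᴸ k_g ds = 2π − A. Let M := sup_{s∈[0,L]} k_g(s) and k̄ := (1/L)∫₀ᴸ k_g ds. Then L² − A(4π − A) ≤ (∫₀ᴸ sqrt(1 + k_g²) ds)² − 4π² − (L/(1 + M²)) ∫₀ᴸ (k_g(s) − k̄)² ds. -/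

import Mathlib

open scoped RealInnerProductSpace

/-- The cross product of two vectors in `ℝ³`. -/
noncomputable def cross3 (a b : EuclideanSpace ℝ (Fin 3)) : EuclideanSpace ℝ (Fin 3) :=
  WithLp.toLp 2 ![a 1 * b 2 - a 2 * b 1, a 2 * b 0 - a 0 * b 2, a 0 * b 1 - a 1 * b 0]

/-- The intrinsic (spherical) normal `η = γ × γ'` of a curve on the unit sphere. -/
noncomputable def sphNormal (γ : ℝ → EuclideanSpace ℝ (Fin 3)) (s : ℝ) :
    EuclideanSpace ℝ (Fin 3) :=
  cross3 (γ s) (deriv γ s)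

/-- The geodesic curvature `k_g = ⟨γ'', η⟩` of a unit-speed curve on the unit sphere. -/
noncomputable def geodCurv (γ : ℝ → EuclideanSpace ℝ (Fin 3)) (s : ℝ) : ℝ :=
  ⟪deriv (deriv γ) s, sphNormal γ s⟫

lemma geodCurv_continuous (γ : ℝ → EuclideanSpace ℝ (Fin 3)) (hγ : ContDiff ℝ (⊤ : ℕ∞) γ) :
    Continuous (geodCurv γ) := by
  have h0' : ContDiff ℝ (↑(⊤:ℕ∞)) γ := hγ.of_le (by simp)
  have h1' : ContDiff ℝ (↑(⊤:ℕ∞)) (deriv γ) := (contDiff_infty_iff_deriv.mp h0').2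
  have h2 : Continuous (deriv (deriv γ)) := ((contDiff_infty_iff_deriv.mp h1').2).continuous
  have h0 : Continuous γ := h0'.continuous
  have h1 : Continuous (deriv γ) := h1'.continuous
  have hexp : geodCurv γ = fun s =>
      deriv (deriv γ) s 0 * (γ s 1 * deriv γ s 2 - γ s 2 * deriv γ s 1)
      + deriv (deriv γ) s 1 * (γ s 2 * deriv γ s 0 - γ s 0 * deriv γ s 2)
      + deriv (deriv γ) s 2 * (γ s 0 * deriv γ s 1 - γ s 1 * deriv γ s 0) := by
    funext s
    simp [geodCurv, sphNormal, cross3, PiLp.inner_apply, RCLike.inner_apply, Fin.sum_univ_three]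
    ring
  rw [hexp]
  have c : ∀ (f : ℝ → EuclideanSpace ℝ (Fin 3)), Continuous f → ∀ i : Fin 3,
      Continuous fun s => f s i := fun f hf i => (continuous_apply i).comp ((PiLp.continuous_ofLp 2 _).comp hf)
  exact (((c _ h2 0).mul (((c _ h0 1).mul (c _ h1 2)).sub ((c _ h0 2).mul (c _ h1 1)))).add
    ((c _ h2 1).mul (((c _ h0 2).mul (c _ h1 0)).sub ((c _ h0 0).mul (c _ h1 2))))).add
    ((c _ h2 2).mul (((c _ h0 0).mul (c _ h1 1)).sub ((c _ h0 1).mul (c _ h1 0))))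

lemma integral_quad (L a b d : ℝ) (k : ℝ → ℝ) (hk : Continuous k) :
    ∫ t in (0:ℝ)..L, (a + b * k t + d * (k t) ^ 2)
      = a * L + b * (∫ t in (0:ℝ)..L, k t) + d * (∫ t in (0:ℝ)..L, (k t) ^ 2) := by
  have i1 : IntervalIntegrable (fun t => a + b * k t) MeasureTheory.volume 0 L :=
    (continuous_const.add (continuous_const.mul hk)).intervalIntegrable _ _
  have i2 : IntervalIntegrable (fun t => d * (k t) ^ 2) MeasureTheory.volume 0 L :=
    (continuous_const.mul (hk.pow 2)).intervalIntegrable _ _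
  have i3 : IntervalIntegrable (fun t => b * k t) MeasureTheory.volume 0 L :=
    (continuous_const.mul hk).intervalIntegrable _ _
  rw [intervalIntegral.integral_add i1 i2, intervalIntegral.integral_add
    (intervalIntegrable_const) i3, intervalIntegral.integral_const,
    intervalIntegral.integral_const_mul, intervalIntegral.integral_const_mul]
  simp [smul_eq_mul, mul_comm]

lemma key_cs (M a b : ℝ) (ha : 0 ≤ a) (hb : 0 ≤ b) (haM : a ≤ M) (hbM : b ≤ M) :
    1 + a * b + 1 / (2 * (1 + M ^ 2)) * (a - b) ^ 2
      ≤ Real.sqrt (1 + a ^ 2) * Real.sqrt (1 + b ^ 2) := by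
  have hP : (0:ℝ) < 1 + M ^ 2 := by positivity
  set X := Real.sqrt (1 + a ^ 2) * Real.sqrt (1 + b ^ 2) with hX
  have hX2 : X ^ 2 = (1 + a ^ 2) * (1 + b ^ 2) := by
    rw [hX, mul_pow, Real.sq_sqrt (by positivity), Real.sq_sqrt (by positivity)]
  have hXnn : 0 ≤ X := by positivity
  have hY : (0:ℝ) ≤ 1 + a * b := by positivity
  have hXY : 1 + a * b ≤ X := by
    nlinarith [sq_nonneg (a - b), sq_nonneg (X - (1 + a*b))]
  have hXle : X ≤ 1 + M ^ 2 := by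
    nlinarith [sq_nonneg (a*b - M^2), mul_le_mul haM hbM hb (ha.trans haM)]
  have hkey : 1 / (2 * (1 + M ^ 2)) * (a - b) ^ 2 ≤ X - (1 + a * b) := by
    rw [one_div, ← div_eq_inv_mul, div_le_iff₀ (by positivity)]
    nlinarith [mul_nonneg (sub_nonneg.2 hXY)
      (sub_nonneg.2 (by linarith : X + (1 + a * b) ≤ 2 * (1 + M ^ 2)))]
  linarith

theorem reverse_isoperimetric_sphere_oscillation (L : ℝ) (hL : 0 < L)
    (γ : ℝ → EuclideanSpace ℝ (Fin 3)) (hγ : ContDiff ℝ (⊤ : ℕ∞) γ)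
    (hper : Function.Periodic γ L)
    (hsph : ∀ s, ‖γ s‖ = 1) (hunit : ∀ s, ‖deriv γ s‖ = 1)
    (hkg : ∀ s, 0 < geodCurv γ s)
    (A : ℝ) (hA₀ : 0 < A) (hA₁ : A < 2 * Real.pi)
    (hGB : ∫ s in (0:ℝ)..L, geodCurv γ s = 2 * Real.pi - A)
    (M : ℝ) (hM : M = sSup (geodCurv γ '' Set.Icc 0 L))
    (kbar : ℝ) (hkbar : kbar = (1 / L) * ∫ s in (0:ℝ)..L, geodCurv γ s) :
    L ^ 2 - A * (4 * Real.pi - A)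
      ≤ (∫ s in (0:ℝ)..L, Real.sqrt (1 + (geodCurv γ s) ^ 2)) ^ 2
        - 4 * Real.pi ^ 2
        - (L / (1 + M ^ 2)) * ∫ s in (0:ℝ)..L, (geodCurv γ s - kbar) ^ 2 := by
  have hkc : Continuous (geodCurv γ) := geodCurv_continuous γ hγ
  have hfc : Continuous fun s => Real.sqrt (1 + geodCurv γ s ^ 2) :=
    Real.continuous_sqrt.comp (continuous_const.add (hkc.pow 2))
  have hP : (0:ℝ) < 1 + M ^ 2 := by positivity
  -- bound k ≤ M on [0, L]
  have hMb : ∀ s ∈ Set.Icc (0:ℝ) L, geodCurv γ s ≤ M := by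
    intro s hs
    rw [hM]
    exact le_csSup (isCompact_Icc.bddAbove_image hkc.continuousOn)
      (Set.mem_image_of_mem _ hs)
  -- abbreviations
  set c : ℝ := 1 / (2 * (1 + M ^ 2)) with hc
  set K : ℝ := ∫ s in (0:ℝ)..L, geodCurv γ s with hKdef
  set Q : ℝ := ∫ s in (0:ℝ)..L, (geodCurv γ s) ^ 2 with hQdef
  set I : ℝ := ∫ s in (0:ℝ)..L, Real.sqrt (1 + geodCurv γ s ^ 2) with hIdef
  set V : ℝ := ∫ s in (0:ℝ)..L, (geodCurv γ s - kbar) ^ 2 with hVdef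
  -- inner integral inequality
  have hinner : ∀ s ∈ Set.Icc (0:ℝ) L,
      (1 + c * (geodCurv γ s) ^ 2) * L + (geodCurv γ s - 2 * c * geodCurv γ s) * K + c * Q
        ≤ Real.sqrt (1 + geodCurv γ s ^ 2) * I := by
    intro s hs
    have h1 : (∫ t in (0:ℝ)..L, ((1 + c * (geodCurv γ s) ^ 2)
          + (geodCurv γ s - 2 * c * geodCurv γ s) * geodCurv γ t + c * (geodCurv γ t) ^ 2))
        ≤ ∫ t in (0:ℝ)..L,
            Real.sqrt (1 + geodCurv γ s ^ 2) * Real.sqrt (1 + geodCurv γ t ^ 2) := by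
      refine intervalIntegral.integral_mono_on hL.le
        (((continuous_const.add (continuous_const.mul hkc)).add
          (continuous_const.mul (hkc.pow 2))).intervalIntegrable _ _)
        ((continuous_const.mul hfc).intervalIntegrable _ _) ?_
      intro t ht
      have hk := key_cs M (geodCurv γ s) (geodCurv γ t) (hkg s).le (hkg t).le
        (hMb s hs) (hMb t ht)
      rw [← hc] at hk
      nlinarith [hk]
    rw [integral_quad L _ _ _ _ hkc, intervalIntegral.integral_const_mul, ← hKdef, ← hQdef,
      ← hIdef] at h1
    exact h1
  -- outer integration
  have hint1 : IntervalIntegrable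
      (fun s => (1 + c * (geodCurv γ s) ^ 2) * L
        + (geodCurv γ s - 2 * c * geodCurv γ s) * K + c * Q) MeasureTheory.volume 0 L :=
    ((((continuous_const.add (continuous_const.mul (hkc.pow 2))).mul continuous_const).add
      ((hkc.sub (continuous_const.mul hkc)).mul continuous_const)).add
      continuous_const).intervalIntegrable _ _
  have hint2 : IntervalIntegrable (fun s => Real.sqrt (1 + geodCurv γ s ^ 2) * I)
      MeasureTheory.volume 0 L := (hfc.mul continuous_const).intervalIntegrable _ _
  have houter := intervalIntegral.integral_mono_on hL.le hint1 hint2 hinner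
  have hrhs : (∫ s in (0:ℝ)..L, Real.sqrt (1 + geodCurv γ s ^ 2) * I) = I ^ 2 := by
    rw [intervalIntegral.integral_mul_const, ← hIdef, sq]
  have hlhs : (∫ s in (0:ℝ)..L, ((1 + c * (geodCurv γ s) ^ 2) * L
        + (geodCurv γ s - 2 * c * geodCurv γ s) * K + c * Q))
      = (L + c * Q) * L + (K - 2 * c * K) * K + (c * L) * Q := by
    rw [show (fun s => (1 + c * (geodCurv γ s) ^ 2) * L
        + (geodCurv γ s - 2 * c * geodCurv γ s) * K + c * Q)
      = fun s => (L + c * Q) + ((K - 2 * c * K) * geodCurv γ s)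
        + (c * L) * (geodCurv γ s) ^ 2 from funext fun s => by ring]
    rw [integral_quad L _ _ _ _ hkc, ← hKdef, ← hQdef]
  rw [hrhs, hlhs] at houter
  -- compute V
  have hVeq : V = kbar ^ 2 * L + (-2 * kbar) * K + 1 * Q := by
    rw [hVdef, show (fun s => (geodCurv γ s - kbar) ^ 2)
      = fun s => kbar ^ 2 + (-2 * kbar) * geodCurv γ s + 1 * (geodCurv γ s) ^ 2 from
        funext fun s => by ring]
    rw [integral_quad L _ _ _ _ hkc, ← hKdef, ← hQdef]
  have hV2 : (L / (1 + M ^ 2)) * V = 2 * c * (L * Q - K ^ 2) := by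
    have hL0 : L ≠ 0 := hL.ne'
    rw [hVeq, hkbar, hc]
    field_simp
    ring
  rw [hGB] at houter hV2
  linarith [houter, hV2]
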